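/- Let D be a Eulerian directed graph on n vertices with all degrees positive. Then (1 − λ_1)² ≤ σ_0² ≤ 1, where λ_1 is the first non-trivial eigenvalue of the Laplacian of D and σ_0 is the second largest singular value of L_0 = T^{-1/2} A T^{-1/2}. -/

import Mathlib

open Matrix Polynomial

noncomputable section

/-- The (out-)degree of a vertex in a directed graph with adjacency matrix `A`. -/
def ddeg {V : Type*} [Fintype V] (A : Matrix V V ℝ) (x : V) : ℝ := ∑ y, A x y

/-- The diagonal matrix `T^{-1/2}` of a directed graph. -/
def dInvSqrtT {V : Type*} [Fintype V] [DecidableEq V] (A : Matrix V V ℝ) : Matrix V V ℝ :=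
  Matrix.diagonal fun x => (Real.sqrt (ddeg A x))⁻¹

/-- The non-symmetric Laplacian `vecL = I - T^{-1/2} A T^{-1/2}` of a directed graph. -/
def dvecL {V : Type*} [Fintype V] [DecidableEq V] (A : Matrix V V ℝ) : Matrix V V ℝ :=
  1 - dInvSqrtT A * A * dInvSqrtT A

/-- The Laplacian `(vecL + vecLᵀ)/2` of a directed graph. -/
def dLap {V : Type*} [Fintype V] [DecidableEq V] (A : Matrix V V ℝ) : Matrix V V ℝ :=
  (1 / 2 : ℝ) • (dvecL A + (dvecL A)ᵀ)

/-- The matrix `L_α = I - (1-α) vecL = T^{1/2} P_α T^{-1/2}`. -/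
def dLalpha {V : Type*} [Fintype V] [DecidableEq V] (A : Matrix V V ℝ) (α : ℝ) :
    Matrix V V ℝ :=
  1 - (1 - α) • dvecL A

/-- The transition matrix `P_α = α I + (1-α) T⁻¹ A` of the α-lazy random walk. -/
def dTrans {V : Type*} [Fintype V] [DecidableEq V] (A : Matrix V V ℝ) (α : ℝ) :
    Matrix V V ℝ :=
  α • (1 : Matrix V V ℝ) + (1 - α) • ((Matrix.diagonal fun x => (ddeg A x)⁻¹) * A)

/-- The volume of a set of vertices of a directed graph. -/
def dvol {V : Type*} [Fintype V] (A : Matrix V V ℝ) (X : Finset V) : ℝ :=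
  ∑ x ∈ X, ddeg A x

/-- The unit vector `φ₀` with `φ₀(x) = √(d_x)/√(vol D)`. -/
def dphi {V : Type*} [Fintype V] (A : Matrix V V ℝ) : V → ℝ :=
  fun x => Real.sqrt (ddeg A x) / Real.sqrt (dvol A Finset.univ)

/-- Euclidean norm of a (row or column) vector. -/
def euclNorm {m : Type*} [Fintype m] (f : m → ℝ) : ℝ := Real.sqrt (∑ x, f x ^ 2)

/-- The set of values `‖L_α f‖ / ‖f‖` over nonzero vectors `f` orthogonal to `φ₀ᵀ`;
its greatest element is the second largest singular value `σ_α` of `L_α`. -/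
def sigmaSet {V : Type*} [Fintype V] [DecidableEq V] (A : Matrix V V ℝ) (α : ℝ) : Set ℝ :=
  {r | ∃ f : V → ℝ, f ≠ 0 ∧ (∑ x, f x * dphi A x) = 0 ∧
    r = euclNorm (dLalpha A α *ᵥ f) / euclNorm f}

/-- `μ` lists the eigenvalues of the square matrix `M` (with multiplicity)
in non-decreasing order. -/
def IsEigenSeq {m : Type*} [Fintype m] [DecidableEq m] (M : Matrix m m ℝ) {n : ℕ}
    (μ : Fin n → ℝ) : Prop :=
  Monotone μ ∧ M.charpoly = ∏ i, (X - C (μ i))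

/-! Write `M = T^{-1/2} A T^{-1/2}`, so that `L₀ = M` and `L = I - (M + Mᵀ)/2`. Cauchy–Schwarz on
each row of `M`, followed by the Euler condition (column sums equal row sums), shows that `M` is a
contraction; this gives `σ₀ ≤ 1` and `L ⪰ 0`. Both `M` and `Mᵀ` fix `φ₀`, so `L φ₀ = 0`.
If `L f = λ₁ f` then `⟨f, M f⟩ = (1 - λ₁)‖f‖²`, hence `‖M f‖ ≥ |1 - λ₁| ‖f‖` by Cauchy–Schwarz,
and such an eigenvector `f` can be taken orthogonal to `φ₀`: when `λ₁ ≠ 0` every one is, and when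
`λ₁ = 0` also `λ₀ = 0` because `L ⪰ 0`, so the kernel of `L` is at least two-dimensional. -/

section LinearAlgebra

variable {n : Type*} [Fintype n]

theorem Matrix.dotProduct_eq_zero_of_mulVec_eq_smul {B : Matrix n n ℝ} (hB : Bᵀ = B)
    {u w : n → ℝ} {a b : ℝ} (hab : a ≠ b) (hu : B *ᵥ u = a • u) (hw : B *ᵥ w = b • w) :
    u ⬝ᵥ w = 0 := by
  have h : a * (u ⬝ᵥ w) = b * (u ⬝ᵥ w) := by
    rw [← smul_eq_mul, ← smul_dotProduct, ← hu, ← smul_eq_mul, ← dotProduct_smul, ← hw,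
      dotProduct_mulVec, ← mulVec_transpose, hB, dotProduct_comm]
  have h' : (a - b) * (u ⬝ᵥ w) = 0 := by linear_combination h
  exact (mul_eq_zero.mp h').resolve_left (sub_ne_zero.mpr hab)

theorem exists_smul_add_smul_ne_zero_dotProduct_eq_zero {K : Type*} [Field K] {u w : n → K}
    (h : LinearIndependent K ![u, w]) (φ : n → K) :
    ∃ c d : K, c • u + d • w ≠ 0 ∧ (c • u + d • w) ⬝ᵥ φ = 0 := by
  by_cases hu : u ⬝ᵥ φ = 0
  · exact ⟨1, 0, by simpa using h.ne_zero 0, by simpa using hu⟩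
  refine ⟨w ⬝ᵥ φ, -(u ⬝ᵥ φ), fun h0 => hu ?_, ?_⟩
  · simpa using (LinearIndependent.pair_iff.mp h _ _ h0).2
  · simp only [add_dotProduct, smul_dotProduct, smul_eq_mul]
    ring

variable [DecidableEq n]

theorem Matrix.IsHermitian.linearIndependent_eigenvectorBasis_pair {B : Matrix n n ℝ}
    (hB : B.IsHermitian) {a b : n} (hab : a ≠ b) :
    LinearIndependent ℝ ![⇑(hB.eigenvectorBasis a), ⇑(hB.eigenvectorBasis b)] := by
  have h := (hB.eigenvectorBasis.orthonormal.linearIndependent.comp ![a, b] ?_).map'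
    (WithLp.linearEquiv 2 ℝ (n → ℝ)).toLinearMap (LinearEquiv.ker _)
  · have e : ![⇑(hB.eigenvectorBasis a), ⇑(hB.eigenvectorBasis b)] =
        (WithLp.linearEquiv 2 ℝ (n → ℝ)) ∘ hB.eigenvectorBasis ∘ ![a, b] := by
      ext i; fin_cases i <;> rfl
    rwa [e]
  · intro i j; fin_cases i <;> fin_cases j <;> simp [hab, hab.symm]

end LinearAlgebra

section Spectral

open Finset

variable {n : Type*} [Fintype n] [DecidableEq n] {B : Matrix n n ℝ}

theorem Matrix.IsHermitian.exists_mulVec_eq_smul_dotProduct_eq_zero (hB : B.IsHermitian)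
    (φ : n → ℝ) {a b : n} (hab : a ≠ b) (h : hB.eigenvalues a = hB.eigenvalues b) :
    ∃ f ≠ 0, f ⬝ᵥ φ = 0 ∧ B *ᵥ f = hB.eigenvalues a • f := by
  obtain ⟨c, d, hne, hφ⟩ := exists_smul_add_smul_ne_zero_dotProduct_eq_zero
    (hB.linearIndependent_eigenvectorBasis_pair hab) φ
  refine ⟨_, hne, hφ, ?_⟩
  rw [mulVec_add, mulVec_smul, mulVec_smul, hB.mulVec_eigenvectorBasis,
    hB.mulVec_eigenvectorBasis, h, smul_comm c, smul_comm d, smul_add]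

theorem Matrix.IsHermitian.map_eigenvalues_eq_of_charpoly_eq (hB : B.IsHermitian) {m : ℕ}
    {μ : Fin m → ℝ} (h : B.charpoly = ∏ i, (X - C (μ i))) :
    univ.val.map hB.eigenvalues = univ.val.map μ := by
  have := hB.roots_charpoly_eq_eigenvalues
  rw [h, Polynomial.roots_prod _ _ (by simp [prod_ne_zero_iff, X_sub_C_ne_zero])] at this
  simpa using this.symm

theorem Matrix.PosSemidef.exists_mulVec_eq_smul_dotProduct_eq_zero (hB : B.PosSemidef)
    {φ : n → ℝ} (hφ : B *ᵥ φ = 0) {m : ℕ} {μ : Fin m → ℝ} (hμ : IsEigenSeq B μ)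
    {i j : Fin m} (hji : j < i) :
    ∃ f ≠ 0, f ⬝ᵥ φ = 0 ∧ B *ᵥ f = μ i • f := by
  have hmap := hB.1.map_eigenvalues_eq_of_charpoly_eq hμ.2
  have hmem (k : Fin m) : ∃ a, hB.1.eigenvalues a = μ k := by
    have hk : μ k ∈ univ.val.map hB.1.eigenvalues :=
      hmap ▸ Multiset.mem_map_of_mem μ (mem_univ_val k)
    simpa using hk
  obtain ⟨a, ha⟩ := hmem i
  rcases ne_or_eq (μ i) 0 with hi | hi
  · refine ⟨_, fun h0 => hB.1.eigenvectorBasis.orthonormal.ne_zero a (by simpa using h0),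
      ?_, ha ▸ hB.1.mulVec_eigenvectorBasis a⟩
    refine dotProduct_eq_zero_of_mulVec_eq_smul (by simpa using hB.1.eq) (ha ▸ hi)
      (hB.1.mulVec_eigenvectorBasis a) (b := 0) ?_
    simpa using hφ
  -- the eigenvalue `0` sits at both positions `j` and `i`, so it is a double eigenvalue
  have hj : μ j = μ i := by
    obtain ⟨b, hb⟩ := hmem j
    exact le_antisymm (hμ.1 hji.le) (hi ▸ hb ▸ hB.eigenvalues_nonneg b)
  have hcard : 1 < #{a | μ i = hB.1.eigenvalues a} := by
    have hcount := congrArg (Multiset.count (μ i)) hmap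
    simp only [Multiset.count_map, ← filter_val, ← card_def] at hcount
    rw [hcount]
    exact one_lt_card.mpr ⟨i, by simp, j, by simp [hj], hji.ne'⟩
  obtain ⟨a, ha, b, hb, hab⟩ := one_lt_card.mp hcard
  simp only [mem_filter, mem_univ, true_and] at ha hb
  exact ha ▸ hB.1.exists_mulVec_eq_smul_dotProduct_eq_zero φ hab (ha.symm.trans hb)

end Spectral

section EuclNorm

variable {m : Type*} [Fintype m]

theorem euclNorm_eq_norm (f : m → ℝ) : euclNorm f = ‖WithLp.toLp 2 f‖ := by
  simp [euclNorm, EuclideanSpace.norm_eq]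

theorem euclNorm_nonneg (f : m → ℝ) : 0 ≤ euclNorm f := Real.sqrt_nonneg _

theorem euclNorm_pos {f : m → ℝ} (hf : f ≠ 0) : 0 < euclNorm f := by
  rw [euclNorm_eq_norm, norm_pos_iff]
  simpa using hf

theorem euclNorm_sq (f : m → ℝ) : euclNorm f ^ 2 = f ⬝ᵥ f := by
  rw [euclNorm_eq_norm, ← real_inner_self_eq_norm_sq, EuclideanSpace.inner_toLp_toLp, star_trivial]

theorem abs_dotProduct_le_euclNorm_mul (f g : m → ℝ) : |f ⬝ᵥ g| ≤ euclNorm f * euclNorm g := by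
  rw [euclNorm_eq_norm, euclNorm_eq_norm, dotProduct_comm, ← star_trivial f,
    ← EuclideanSpace.inner_toLp_toLp, star_trivial]
  exact abs_real_inner_le_norm _ _

end EuclNorm

section Digraph

open Finset

variable {V : Type*} [Fintype V]

theorem ddeg_transpose {A : Matrix V V ℝ} (hEuler : ∀ x, ∑ y, A x y = ∑ y, A y x) :
    ddeg Aᵀ = ddeg A :=
  funext fun x => (hEuler x).symm

theorem dphi_transpose {A : Matrix V V ℝ} (hEuler : ∀ x, ∑ y, A x y = ∑ y, A y x) :
    dphi Aᵀ = dphi A := by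
  unfold dphi dvol
  rw [ddeg_transpose hEuler]

variable [DecidableEq V] (A : Matrix V V ℝ)

def normAdj : Matrix V V ℝ := dInvSqrtT A * A * dInvSqrtT A

theorem dLalpha_zero : dLalpha A 0 = normAdj A := by
  simp [dLalpha, dvecL, normAdj]

theorem dLap_eq : dLap A = 1 - (1 / 2 : ℝ) • (normAdj A + (normAdj A)ᵀ) := by
  rw [dLap, dvecL, ← normAdj, transpose_sub, transpose_one]
  module

theorem isHermitian_dLap : (dLap A).IsHermitian := by
  simp [IsHermitian, dLap, add_comm]

theorem dotProduct_dLap_mulVec (f : V → ℝ) :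
    f ⬝ᵥ (dLap A *ᵥ f) = f ⬝ᵥ f - f ⬝ᵥ (normAdj A *ᵥ f) := by
  rw [dLap_eq, sub_mulVec, one_mulVec, smul_mulVec, add_mulVec, dotProduct_sub,
    dotProduct_smul, dotProduct_add, dotProduct_mulVec f (normAdj A)ᵀ, vecMul_transpose,
    dotProduct_comm (normAdj A *ᵥ f), smul_eq_mul]
  ring

theorem normAdj_mulVec_apply (f : V → ℝ) (x : V) :
    (normAdj A *ᵥ f) x = (√(ddeg A x))⁻¹ * ∑ y, A x y * ((√(ddeg A y))⁻¹ * f y) := by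
  simp [normAdj, dInvSqrtT, mulVec, dotProduct, mul_sum, mul_assoc]

variable {A}

theorem normAdj_transpose (hEuler : ∀ x, ∑ y, A x y = ∑ y, A y x) :
    (normAdj A)ᵀ = normAdj Aᵀ := by
  simp [normAdj, dInvSqrtT, ddeg_transpose hEuler, transpose_mul, Matrix.mul_assoc]

theorem normAdj_mulVec_dphi (hdeg : ∀ x, 0 < ddeg A x) : normAdj A *ᵥ dphi A = dphi A := by
  have hsqrt : normAdj A *ᵥ (fun x => √(ddeg A x)) = fun x => √(ddeg A x) := by
    funext x
    rw [normAdj_mulVec_apply,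
      sum_congr rfl fun y _ => by rw [inv_mul_cancel₀ (Real.sqrt_pos.mpr (hdeg y)).ne', mul_one],
      ← ddeg, inv_mul_eq_div, Real.div_sqrt]
  have hphi : dphi A = (√(dvol A univ))⁻¹ • fun x => √(ddeg A x) := by
    funext x; simp [dphi, div_eq_inv_mul]
  rw [hphi, mulVec_smul, hsqrt]

theorem dLap_mulVec_dphi (hEuler : ∀ x, ∑ y, A x y = ∑ y, A y x)
    (hdeg : ∀ x, 0 < ddeg A x) : dLap A *ᵥ dphi A = 0 := by
  have hdegT : ∀ x, 0 < ddeg Aᵀ x := by simpa [ddeg_transpose hEuler] using hdeg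
  have hT := normAdj_mulVec_dphi hdegT
  rw [dphi_transpose hEuler, ← normAdj_transpose hEuler] at hT
  rw [dLap_eq, sub_mulVec, one_mulVec, smul_mulVec, add_mulVec, hT, normAdj_mulVec_dphi hdeg]
  module

theorem sum_sq_normAdj_mulVec_le (hA : ∀ x y, 0 ≤ A x y)
    (hEuler : ∀ x, ∑ y, A x y = ∑ y, A y x) (hdeg : ∀ x, 0 < ddeg A x) (f : V → ℝ) :
    ∑ x, (normAdj A *ᵥ f) x ^ 2 ≤ ∑ x, f x ^ 2 := by
  set c : V → ℝ := fun y => (√(ddeg A y))⁻¹ * f y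
  have hrow (x : V) : (normAdj A *ᵥ f) x ^ 2 ≤ ∑ y, A x y * c y ^ 2 := by
    have hCS : (∑ y, A x y * c y) ^ 2 ≤ ddeg A x * ∑ y, A x y * c y ^ 2 :=
      sum_sq_le_sum_mul_sum_of_sq_le_mul _ (fun y _ => hA x y)
        (fun y _ => mul_nonneg (hA x y) (sq_nonneg _)) (fun y _ => le_of_eq (by ring))
    rw [normAdj_mulVec_apply, mul_pow, inv_pow, Real.sq_sqrt (hdeg x).le,
      inv_mul_le_iff₀ (hdeg x)]
    exact hCS
  calc ∑ x, (normAdj A *ᵥ f) x ^ 2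
      ≤ ∑ x, ∑ y, A x y * c y ^ 2 := sum_le_sum fun x _ => hrow x
    _ = ∑ y, ddeg A y * c y ^ 2 := by
        rw [sum_comm]
        simp only [← sum_mul, ← hEuler, ddeg]
    _ = ∑ y, f y ^ 2 := by
        refine sum_congr rfl fun y _ => ?_
        rw [mul_pow, inv_pow, Real.sq_sqrt (hdeg y).le, mul_inv_cancel_left₀ (hdeg y).ne']

theorem euclNorm_normAdj_mulVec_le (hA : ∀ x y, 0 ≤ A x y)
    (hEuler : ∀ x, ∑ y, A x y = ∑ y, A y x) (hdeg : ∀ x, 0 < ddeg A x) (f : V → ℝ) :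
    euclNorm (normAdj A *ᵥ f) ≤ euclNorm f :=
  Real.sqrt_le_sqrt (sum_sq_normAdj_mulVec_le hA hEuler hdeg f)

theorem posSemidef_dLap (hA : ∀ x y, 0 ≤ A x y)
    (hEuler : ∀ x, ∑ y, A x y = ∑ y, A y x) (hdeg : ∀ x, 0 < ddeg A x) :
    (dLap A).PosSemidef := by
  refine .of_dotProduct_mulVec_nonneg (isHermitian_dLap A) fun f => ?_
  have hf := abs_dotProduct_le_euclNorm_mul f (normAdj A *ᵥ f)
  have hM := mul_le_mul_of_nonneg_left (euclNorm_normAdj_mulVec_le hA hEuler hdeg f)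
    (euclNorm_nonneg f)
  rw [star_trivial, dotProduct_dLap_mulVec, ← euclNorm_sq]
  nlinarith [le_abs_self (f ⬝ᵥ (normAdj A *ᵥ f))]

theorem abs_one_sub_mul_euclNorm_le {f : V → ℝ} {t : ℝ} (hf : dLap A *ᵥ f = t • f) :
    |1 - t| * euclNorm f ≤ euclNorm (normAdj A *ᵥ f) := by
  have hq : f ⬝ᵥ (normAdj A *ᵥ f) = (1 - t) * euclNorm f ^ 2 := by
    have := dotProduct_dLap_mulVec A f
    rw [hf, dotProduct_smul, smul_eq_mul] at this
    rw [euclNorm_sq]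
    linarith
  rcases (euclNorm_nonneg f).eq_or_lt with h0 | hpos
  · simp [← h0, euclNorm_nonneg]
  refine le_of_mul_le_mul_right ?_ hpos
  calc |1 - t| * euclNorm f * euclNorm f = |f ⬝ᵥ (normAdj A *ᵥ f)| := by
        rw [hq, abs_mul, abs_sq]; ring
    _ ≤ euclNorm (normAdj A *ᵥ f) * euclNorm f := by
        rw [mul_comm]; exact abs_dotProduct_le_euclNorm_mul _ _

end Digraph

/-- `(1-λ₁)² ≤ σ₀² ≤ 1` for a Eulerian directed graph. -/
theorem stmt_4 {V : Type*} [Fintype V] [DecidableEq V]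
    (A : Matrix V V ℝ)
    (h01 : ∀ x y, A x y = 0 ∨ A x y = 1)
    (hEuler : ∀ x, (∑ y, A x y) = ∑ y, A y x)
    (hdegpos : ∀ x, 0 < ddeg A x)
    (n : ℕ) (hn2 : 2 ≤ n)
    (μ : Fin n → ℝ) (hμ : IsEigenSeq (dLap A) μ)
    (σ₀ : ℝ) (hσ₀ : IsGreatest (sigmaSet A 0) σ₀) :
    (1 - μ ⟨1, by omega⟩) ^ 2 ≤ σ₀ ^ 2 ∧ σ₀ ^ 2 ≤ 1 := by
  have hA : ∀ x y, 0 ≤ A x y := fun x y => by rcases h01 x y with h | h <;> simp [h]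
  obtain ⟨f, hf0, hfφ, hf⟩ :=
    (posSemidef_dLap hA hEuler hdegpos).exists_mulVec_eq_smul_dotProduct_eq_zero
      (dLap_mulVec_dphi hEuler hdegpos) hμ (j := ⟨0, by omega⟩) (i := ⟨1, by omega⟩) (by simp)
  have hmem : euclNorm (normAdj A *ᵥ f) / euclNorm f ∈ sigmaSet A 0 :=
    ⟨f, hf0, hfφ, by rw [dLalpha_zero]⟩
  have hgap : |1 - μ ⟨1, by omega⟩| ≤ euclNorm (normAdj A *ᵥ f) / euclNorm f :=
    (le_div_iff₀ (euclNorm_pos hf0)).mpr (abs_one_sub_mul_euclNorm_le hf)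
  obtain ⟨g, -, -, hσ⟩ := hσ₀.1
  rw [dLalpha_zero] at hσ
  have hσ_nonneg : 0 ≤ σ₀ := hσ ▸ div_nonneg (euclNorm_nonneg _) (euclNorm_nonneg _)
  have hσ_le : σ₀ ≤ 1 := hσ ▸ div_le_one_of_le₀
    (euclNorm_normAdj_mulVec_le hA hEuler hdegpos g) (euclNorm_nonneg g)
  refine ⟨?_, pow_le_one₀ hσ_nonneg hσ_le⟩
  rw [← sq_abs]
  exact pow_le_pow_left₀ (abs_nonneg _) (hgap.trans (hσ₀.2 hmem)) 2
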